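/- Let d, k ≥ 1 be integers, ε ∈ [0, 2^{-kd}], and let μ be a dyadic mean (k,η,ε)-porous Borel probability measure on [0,1)^d. Let R* be the tree of cubes constructed from μ as described (with any admissible choice of small-measure cubes), and for x ∈ [0,1)^d and i ≥ 0 set M̄_i(x) = log( ℓ(R_i(x)) / ℓ(R_{i+1}(x)) ), where ℓ denotes side length. Then for μ-almost every x, lim_{n→∞} (1/n)·Σ_{i ∈ {0,…,n−1}, R_i(x) ∈ 𝒫} ( λ(R_i(x)) − M̄_i(x) ) = 0. -/

import Mathlib

open MeasureTheory Filter Metric Set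
open scoped ENNReal NNReal

/-- The half-open dyadic cube of side `2^{-n}` containing `x`. -/
def dyadicCube (d n : ℕ) (x : EuclideanSpace ℝ (Fin d)) : Set (EuclideanSpace ℝ (Fin d)) :=
  {y | ∀ j : Fin d, ⌊(2 : ℝ) ^ n * y j⌋ = ⌊(2 : ℝ) ^ n * x j⌋}

/-- `por₂(μ,x,n,ε) ≤ k`: there is `1 ≤ j ≤ k` and a dyadic subcube `R` of `D_n(x)`,
`j` levels below, with `μ(R) ≤ ε·μ(D_n(x))`. -/
def por2Le {d : ℕ} (μ : Measure (EuclideanSpace ℝ (Fin d)))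
    (x : EuclideanSpace ℝ (Fin d)) (n k : ℕ) (ε : ℝ) : Prop :=
  ∃ j : ℕ, 1 ≤ j ∧ j ≤ k ∧ ∃ y ∈ dyadicCube d n x,
    μ (dyadicCube d (n + j) y) ≤ ENNReal.ofReal ε * μ (dyadicCube d n x)

/-- `μ` is dyadic mean `(k,η,ε)`-porous: for `μ`-a.e. `x`,
`liminf_n (1/n)·#{i < n : por₂(μ,x,i,ε) ≤ k} ≥ η`. -/
def DyadicMeanPorousWith {d : ℕ} (μ : Measure (EuclideanSpace ℝ (Fin d)))
    (k : ℕ) (η ε : ℝ) : Prop :=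
  ∀ᵐ x ∂μ, η ≤ Filter.liminf
    (fun n : ℕ => (Set.ncard {i : ℕ | i < n ∧ por2Le μ x i k ε} : ℝ) / n) Filter.atTop

/-- `μ` is dyadic mean `(k,η)`-porous: dyadic mean `(k,η,ε)`-porous for all `ε > 0`. -/
def DyadicMeanPorous {d : ℕ} (μ : Measure (EuclideanSpace ℝ (Fin d))) (k : ℕ) (η : ℝ) : Prop :=
  ∀ ε > 0, DyadicMeanPorousWith μ k η ε

/-- The unit cube `[0,1)^d`. -/
def unitCube (d : ℕ) : Set (EuclideanSpace ℝ (Fin d)) :=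
  {x | ∀ j : Fin d, 0 ≤ x j ∧ x j < 1}

/-- The dyadic cube `D_n(x)` is porous: some dyadic subcube `k` levels below has
`μ`-measure at most `ε·μ(D_n(x))`. -/
def PorousCube {d : ℕ} (μ : Measure (EuclideanSpace ℝ (Fin d))) (ε : ℝ) (k n : ℕ)
    (x : EuclideanSpace ℝ (Fin d)) : Prop :=
  ∃ y ∈ dyadicCube d n x, μ (dyadicCube d (n + k) y) ≤ ENNReal.ofReal ε * μ (dyadicCube d n x)

/-- An admissible choice of small-measure subcubes: for every porous dyadic cube `D_n(x)`,
`c n x` marks a subcube `R = D_{n+k}(c n x) ⊆ D_n(x)` with `μ(R) ≤ ε·μ(D_n(x))`; the choice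
only depends on the cube `D_n(x)`. -/
structure AdmissibleChoice {d : ℕ} (μ : Measure (EuclideanSpace ℝ (Fin d))) (ε : ℝ)
    (k : ℕ) where
  c : ℕ → EuclideanSpace ℝ (Fin d) → EuclideanSpace ℝ (Fin d)
  mem : ∀ n x, PorousCube μ ε k n x → c n x ∈ dyadicCube d n x
  small : ∀ n x, PorousCube μ ε k n x →
    μ (dyadicCube d (n + k) (c n x)) ≤ ENNReal.ofReal ε * μ (dyadicCube d n x)
  compat : ∀ n x y, y ∈ dyadicCube d n x → c n y = c n x

open scoped Classical in
/-- The dyadic level of the offspring cube of the tree `R*` containing `y`, when the current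
node is the dyadic cube `D_m(y)`: if `D_m(y)` is not porous, subdivide into the dyadic cubes
of the next level; if it is porous with chosen small cube `R = D_{m+k}(c m y)`, the offspring
containing `y` is `R` itself if `y ∈ R`, and otherwise the first dyadic ancestor cube of `y`
below `D_m(y)` that does not contain `R`. -/
noncomputable def childLevel {d : ℕ} (μ : Measure (EuclideanSpace ℝ (Fin d))) (ε : ℝ)
    (k : ℕ) (C : AdmissibleChoice μ ε k) (m : ℕ) (y : EuclideanSpace ℝ (Fin d)) : ℕ :=
  if PorousCube μ ε k m y then
    (if C.c m y ∈ dyadicCube d (m + k) y then m + k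
     else m + sInf {j : ℕ | 1 ≤ j ∧ C.c m y ∉ dyadicCube d (m + j) y})
  else m + 1

/-- The dyadic level `M_n(x)` of the tree node `R_n(x)`, so that `R_n(x) = D_{M_n(x)}(x)`. -/
noncomputable def levelSeq {d : ℕ} (μ : Measure (EuclideanSpace ℝ (Fin d))) (ε : ℝ)
    (k : ℕ) (C : AdmissibleChoice μ ε k) (x : EuclideanSpace ℝ (Fin d)) : ℕ → ℕ
  | 0 => 0
  | n + 1 => childLevel μ ε k C (levelSeq μ ε k C x n) x

/-- The Lyapunov exponent `λ(Q) = Σ_{S ∈ R(Q)} μ^Q(S)·log(ℓ(Q)/ℓ(S))` of a porous node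
`Q = D_m(x)` of the tree, computed from the chain of dyadic ancestors
`Q = A_0 ⊇ A_1 ⊇ … ⊇ A_k = R` of the chosen small cube `R = D_{m+k}(c m x)`:
`λ(Q) = (log 2/μ(Q))·(k·μ(A_k) + Σ_{j=1}^k j·(μ(A_{j−1}) − μ(A_j)))`. -/
noncomputable def lyapPorous {d : ℕ} (μ : Measure (EuclideanSpace ℝ (Fin d))) (ε : ℝ)
    (k : ℕ) (C : AdmissibleChoice μ ε k) (m : ℕ) (x : EuclideanSpace ℝ (Fin d)) : ℝ :=
  (Real.log 2 / (μ (dyadicCube d m x)).toReal) *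
    ((k : ℝ) * (μ (dyadicCube d (m + k) (C.c m x))).toReal +
      ∑ j ∈ Finset.range k, ((j : ℝ) + 1) *
        ((μ (dyadicCube d (m + j) (C.c m x))).toReal
          - (μ (dyadicCube d (m + j + 1) (C.c m x))).toReal))


/-!
Write `Y_i` for the `i`-th summand. It depends only on the node `R_{i+1}(x)`, and its integral
over every node `R_i(x)` vanishes: on a porous node `Q = D_m(x)` with chosen cube `R` and dyadic
ancestors `A_j = D_{m+j}(R)`, the child of `Q` containing `y` lies `#{j < k : y ∈ A_j}` levels
below `Q`, and the `μ^Q`-mean of this count is `λ(Q) / log 2` by Abel summation. So `(Y_i)` is a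
bounded martingale difference sequence, hence orthogonal in `L²`, and
`‖Y_0 + ⋯ + Y_{n-1}‖₂² ≤ n B²`. Along the squares `n = m²` these bounds are summable in `m`,
so `(Y_0 + ⋯ + Y_{m²-1}) / m² → 0` almost surely, and boundedness of `Y` fills the gaps
between consecutive squares.
-/

open Finset

section Averages

theorem tendsto_average_of_tendsto_average_sq {a : ℕ → ℝ} {B : ℝ} (ha : ∀ i, |a i| ≤ B)
    (h : Tendsto (fun m : ℕ => (∑ i ∈ range (m ^ 2), a i) / (m ^ 2 : ℕ)) atTop (nhds 0)) :
    Tendsto (fun n : ℕ => (∑ i ∈ range n, a i) / n) atTop (nhds 0) := by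
  have hB : 0 ≤ B := (abs_nonneg _).trans (ha 0)
  have hsqrt : Tendsto Nat.sqrt atTop atTop :=
    tendsto_atTop_atTop.mpr fun b => ⟨b * b, fun n hn => Nat.le_sqrt.mpr hn⟩
  have hbound : Tendsto (fun n : ℕ =>
      |(∑ i ∈ range (n.sqrt ^ 2), a i) / (n.sqrt ^ 2 : ℕ)| + 2 * B / n.sqrt)
      atTop (nhds 0) := by
    simpa using ((tendsto_zero_iff_abs_tendsto_zero _).mp h).comp hsqrt |>.add
      ((tendsto_const_div_atTop_nhds_zero_nat (2 * B)).comp hsqrt)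
  rw [tendsto_zero_iff_abs_tendsto_zero]
  refine squeeze_zero' (Eventually.of_forall fun n => abs_nonneg _) ?_ hbound
  filter_upwards [eventually_ge_atTop 1] with n hn
  set m := n.sqrt
  have hm : 0 < m := Nat.sqrt_pos.mpr hn
  have hmn : m ^ 2 ≤ n := Nat.sqrt_le' n
  have hgap : n - m ^ 2 ≤ 2 * m := by
    have : n < (m + 1) ^ 2 := Nat.lt_succ_sqrt' n
    have : (m + 1) ^ 2 = m ^ 2 + 2 * m + 1 := by ring
    omega
  have htail : |∑ i ∈ Ico (m ^ 2) n, a i| ≤ 2 * m * B := calc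
    |∑ i ∈ Ico (m ^ 2) n, a i| ≤ ∑ i ∈ Ico (m ^ 2) n, |a i| := abs_sum_le_sum_abs _ _
    _ ≤ #(Ico (m ^ 2) n) • B := sum_le_card_nsmul _ _ _ fun i _ => ha i
    _ ≤ 2 * m * B := by
      rw [Nat.card_Ico, nsmul_eq_mul]
      exact mul_le_mul_of_nonneg_right (by exact_mod_cast hgap) hB
  have hm2 : (0 : ℝ) < (m ^ 2 : ℕ) := by positivity
  calc |(∑ i ∈ range n, a i) / n|
      = |∑ i ∈ range (m ^ 2), a i + ∑ i ∈ Ico (m ^ 2) n, a i| / n := by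
        rw [sum_range_add_sum_Ico _ hmn, abs_div, Nat.abs_cast]
    _ ≤ (|∑ i ∈ range (m ^ 2), a i| + 2 * m * B) / (m ^ 2 : ℕ) :=
        div_le_div₀ (by positivity) ((abs_add_le _ _).trans (by linarith)) hm2
          (by exact_mod_cast hmn)
    _ = |(∑ i ∈ range (m ^ 2), a i) / (m ^ 2 : ℕ)| + 2 * B / m := by
        rw [add_div, abs_div, Nat.abs_cast]
        push_cast
        field_simp

end Averages

section Orthogonal

variable {α : Type*} [MeasurableSpace α] {μ : Measure α}

theorem ae_tendsto_zero_of_summable_integral_norm {E : Type*} [NormedAddCommGroup E]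
    {f : ℕ → α → E} (hf : ∀ n, Integrable (f n) μ)
    (hsum : Summable fun n => ∫ x, ‖f n x‖ ∂μ) :
    ∀ᵐ x ∂μ, Tendsto (fun n => f n x) atTop (nhds 0) := by
  have hnorm : ∑' n, eLpNorm (f n) 1 μ ≠ ⊤ := by
    simp_rw [eLpNorm_one_eq_lintegral_enorm, ← ofReal_integral_norm_eq_lintegral_enorm (hf _)]
    rw [← ENNReal.ofReal_tsum_of_nonneg (fun n => integral_nonneg fun x => norm_nonneg _) hsum]
    exact ENNReal.ofReal_ne_top
  filter_upwards [summable_norm_of_tsum_eLpNorm_ne_top le_rfl (fun n => (hf n).1) hnorm]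
    with x hx
  exact tendsto_zero_iff_norm_tendsto_zero.mpr hx.tendsto_atTop_zero

variable [IsFiniteMeasure μ] {Y : ℕ → α → ℝ} {B : ℝ}

theorem integral_sq_sum_le_of_pairwise_orthogonal (hY : ∀ i, AEStronglyMeasurable (Y i) μ)
    (hB : ∀ i x, |Y i x| ≤ B) (horth : Pairwise fun i j => ∫ x, Y i x * Y j x ∂μ = 0)
    (n : ℕ) :
    ∫ x, (∑ i ∈ range n, Y i x) ^ 2 ∂μ ≤ n * (B ^ 2 * μ.real univ) := by
  have hint : ∀ i j, Integrable (fun x => Y i x * Y j x) μ := fun i j =>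
    .of_bound ((hY i).mul (hY j)) (B * B) (Eventually.of_forall fun x => by
      rw [Real.norm_eq_abs, abs_mul]
      exact mul_le_mul (hB i x) (hB j x) (abs_nonneg _) ((abs_nonneg _).trans (hB i x)))
  have hdiag : ∀ i, ∫ x, Y i x * Y i x ∂μ ≤ B ^ 2 * μ.real univ := fun i => calc
    ∫ x, Y i x * Y i x ∂μ ≤ ∫ _, B ^ 2 ∂μ :=
      integral_mono (hint i i) (integrable_const _) fun x => by
        rw [← sq, ← sq_abs]
        exact pow_le_pow_left₀ (abs_nonneg _) (hB i x) 2
    _ = B ^ 2 * μ.real univ := by rw [integral_const, smul_eq_mul, mul_comm]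
  calc ∫ x, (∑ i ∈ range n, Y i x) ^ 2 ∂μ
      = ∑ i ∈ range n, ∑ j ∈ range n, ∫ x, Y i x * Y j x ∂μ := by
        simp_rw [sq, sum_mul_sum]
        rw [integral_finsetSum _ fun i _ => integrable_finsetSum _ fun j _ => hint i j]
        exact sum_congr rfl fun i _ => integral_finsetSum _ fun j _ => hint i j
    _ = ∑ i ∈ range n, ∫ x, Y i x * Y i x ∂μ :=
        sum_congr rfl fun i hi => sum_eq_single_of_mem i hi fun j _ hji => horth hji.symm
    _ ≤ n * (B ^ 2 * μ.real univ) := by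
        simpa using sum_le_sum fun i (_ : i ∈ range n) => hdiag i

theorem ae_tendsto_average_of_pairwise_orthogonal (hY : ∀ i, AEStronglyMeasurable (Y i) μ)
    (hB : ∀ i x, |Y i x| ≤ B) (horth : Pairwise fun i j => ∫ x, Y i x * Y j x ∂μ = 0) :
    ∀ᵐ x ∂μ, Tendsto (fun n : ℕ => (∑ i ∈ range n, Y i x) / n) atTop (nhds 0) := by
  set c := B ^ 2 * μ.real univ
  have hsq : ∀ N, Integrable (fun x => (∑ i ∈ range N, Y i x) ^ 2) μ := fun N =>
    .of_bound (by fun_prop) ((N * B) ^ 2) (Eventually.of_forall fun x => by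
      rw [Real.norm_eq_abs, abs_pow]
      refine pow_le_pow_left₀ (abs_nonneg _) ((abs_sum_le_sum_abs _ _).trans ?_) 2
      simpa using sum_le_sum fun i (_ : i ∈ range N) => hB i x)
  set g : ℕ → α → ℝ := fun m x => ((∑ i ∈ range (m ^ 2), Y i x) / (m ^ 2 : ℕ)) ^ 2
  have hg : ∀ m, Integrable (g m) μ := fun m => by
    simpa only [g, div_pow] using (hsq (m ^ 2)).div_const (((m ^ 2 : ℕ) : ℝ) ^ 2)
  have hgint : ∀ m, ∫ x, ‖g m x‖ ∂μ ≤ c * ((m : ℝ) ^ 2)⁻¹ := fun m => by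
    have hN : (((m ^ 2 : ℕ) : ℝ)) = (m : ℝ) ^ 2 := by push_cast; ring
    simp_rw [g, Real.norm_of_nonneg (sq_nonneg _), div_pow]
    rw [integral_div, hN]
    calc (∫ x, (∑ i ∈ range (m ^ 2), Y i x) ^ 2 ∂μ) / ((m : ℝ) ^ 2) ^ 2
        ≤ (m : ℝ) ^ 2 * c / ((m : ℝ) ^ 2) ^ 2 := by
          gcongr
          exact hN ▸ integral_sq_sum_le_of_pairwise_orthogonal hY hB horth (m ^ 2)
      _ = c * ((m : ℝ) ^ 2)⁻¹ := by
          rcases eq_or_ne (m : ℝ) 0 with hm | hm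
          · simp [hm]
          · field_simp
  have hsum : Summable fun m => ∫ x, ‖g m x‖ ∂μ :=
    .of_nonneg_of_le (fun m => integral_nonneg fun x => norm_nonneg _) hgint
      ((Real.summable_nat_pow_inv.mpr one_lt_two).mul_left c)
  filter_upwards [ae_tendsto_zero_of_summable_integral_norm hg hsum] with x hx
  refine tendsto_average_of_tendsto_average_sq (hB · x) ?_
  rw [tendsto_zero_iff_abs_tendsto_zero]
  simpa [Function.comp_def, g, Real.sqrt_sq_eq_abs] using (Real.continuous_sqrt.tendsto 0).comp hx

end Orthogonal

section Partition

variable {α β : Type*} [MeasurableSpace α] [MeasurableSpace β] [Countable β]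
  [MeasurableSingletonClass β] {F : α → β}

theorem measurable_of_const_on_fibers {γ : Type*} [MeasurableSpace γ] (hF : Measurable F)
    {f : α → γ} (hf : ∀ x y, F x = F y → f x = f y) : Measurable f := by
  intro s _
  have hs : f ⁻¹' s = F ⁻¹' (F '' (f ⁻¹' s)) := by
    refine (subset_preimage_image F _).antisymm ?_
    rintro x ⟨y, hy, hyx⟩
    exact mem_preimage.mpr (hf y x hyx ▸ hy)
  rw [hs]
  exact hF (to_countable _).measurableSet

theorem integral_mul_eq_zero_of_setIntegral_fiber_eq_zero {μ : Measure α} (hF : Measurable F)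
    {f g : α → ℝ} (hfg : Integrable (fun x => f x * g x) μ)
    (hg : ∀ x y, F x = F y → g x = g y) (hf : ∀ x, ∫ y in F ⁻¹' {F x}, f y ∂μ = 0) :
    ∫ x, f x * g x ∂μ = 0 := by
  have hfiber : ∀ b, ∫ x in F ⁻¹' {b}, f x * g x ∂μ = 0 := fun b => by
    rcases eq_empty_or_nonempty (F ⁻¹' {b}) with hb | ⟨x₀, rfl⟩
    · rw [hb, Measure.restrict_empty, integral_zero_measure]
    · rw [setIntegral_congr_fun (hF (measurableSet_singleton _))
        fun y hy => congrArg (f y * ·) (hg y x₀ hy), integral_mul_const, hf, zero_mul]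
  have hcover : ⋃ b, F ⁻¹' {b} = univ := by
    rw [← preimage_iUnion, iUnion_of_singleton, preimage_univ]
  rw [← setIntegral_univ, ← hcover, integral_iUnion
    (fun b => hF (measurableSet_singleton b))
    (fun b c hbc => (Set.disjoint_singleton.mpr hbc).preimage F) hfg.integrableOn]
  simp [hfiber]

end Partition

theorem Antitone.iff_lt_card_filter_range {P : ℕ → Prop} [DecidablePred P] (hP : Antitone P)
    {j k : ℕ} (hj : j < k) : P j ↔ j < #{i ∈ range k | P i} := by
  constructor
  · intro h
    calc j < #(range (j + 1)) := by simp
      _ ≤ #{i ∈ range k | P i} := card_le_card fun i hi => by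
        simp only [Finset.mem_range, mem_filter] at hi ⊢
        exact ⟨by omega, hP (Nat.lt_succ_iff.mp hi) h⟩
  · intro h
    by_contra hn
    have : #{i ∈ range k | P i} ≤ #(range j) := card_le_card fun i hi => by
      simp only [Finset.mem_range, mem_filter] at hi ⊢
      exact lt_of_not_ge fun hij => hn (hP hij hi.2)
    simp only [card_range] at this
    omega

theorem mul_add_sum_range_mul_sub_eq_sum_range (a : ℕ → ℝ) (k : ℕ) :
    k * a k + ∑ j ∈ range k, (j + 1) * (a j - a (j + 1)) = ∑ j ∈ range k, a j := by
  induction k with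
  | zero => simp
  | succ k ih =>
    rw [sum_range_succ, sum_range_succ, ← ih]
    push_cast
    ring

section DyadicCube

variable {d m n : ℕ} {x y : EuclideanSpace ℝ (Fin d)}

theorem mem_dyadicCube_self (n : ℕ) (x : EuclideanSpace ℝ (Fin d)) : x ∈ dyadicCube d n x :=
  fun _ => rfl

theorem mem_dyadicCube_comm : y ∈ dyadicCube d n x ↔ x ∈ dyadicCube d n y :=
  ⟨fun h j => (h j).symm, fun h j => (h j).symm⟩

theorem dyadicCube_eq_of_mem (h : y ∈ dyadicCube d n x) : dyadicCube d n y = dyadicCube d n x :=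
  ext fun _ => ⟨fun hz j => (hz j).trans (h j), fun hz j => (hz j).trans (h j).symm⟩

theorem dyadicCube_subset_of_le (h : m ≤ n) (x : EuclideanSpace ℝ (Fin d)) :
    dyadicCube d n x ⊆ dyadicCube d m x := by
  obtain ⟨t, rfl⟩ := Nat.exists_eq_add_of_le h
  have hfloor (z : ℝ) : ⌊(2 : ℝ) ^ m * z⌋ = ⌊(2 : ℝ) ^ (m + t) * z⌋ / (2 ^ t : ℕ) := by
    rw [← Int.floor_div_natCast, pow_add]
    push_cast
    field_simp
  intro y hy j
  rw [hfloor, hfloor, hy j]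

theorem measurableSet_dyadicCube (n : ℕ) (x : EuclideanSpace ℝ (Fin d)) :
    MeasurableSet (dyadicCube d n x) := by
  have : dyadicCube d n x =
      ⋂ j, (fun y : EuclideanSpace ℝ (Fin d) => ⌊(2 : ℝ) ^ n * y j⌋) ⁻¹' {⌊(2 : ℝ) ^ n * x j⌋} := by
    ext; simp [dyadicCube]
  rw [this]
  exact .iInter fun j => (Int.measurable_floor.comp (by fun_prop)) (measurableSet_singleton _)

end DyadicCube

section Tree

open scoped Classical

variable {d : ℕ} {μ : Measure (EuclideanSpace ℝ (Fin d))} {ε : ℝ} {k : ℕ}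
  (C : AdmissibleChoice μ ε k) {i j m n : ℕ} {x y : EuclideanSpace ℝ (Fin d)}

theorem porousCube_congr (h : y ∈ dyadicCube d m x) :
    PorousCube μ ε k m y ↔ PorousCube μ ε k m x := by
  rw [PorousCube, PorousCube, dyadicCube_eq_of_mem h]

theorem childLevel_of_not_porousCube (hp : ¬PorousCube μ ε k m y) :
    childLevel μ ε k C m y = m + 1 := by
  rw [childLevel, if_neg hp]

theorem childLevel_of_porousCube (hp : PorousCube μ ε k m y) :
    childLevel μ ε k C m y = m + #{j ∈ range k | C.c m y ∈ dyadicCube d (m + j) y} := by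
  set P : ℕ → Prop := fun j => C.c m y ∈ dyadicCube d (m + j) y
  have hP : Antitone P := fun i j hij h => dyadicCube_subset_of_le (by omega) y h
  have hP0 : P 0 := C.mem m y hp
  rw [childLevel, if_pos hp]
  split_ifs with hk
  · rw [filter_true_of_mem fun j hj => hP (Finset.mem_range.mp hj).le hk, card_range]
  · have hk0 : 0 < k := Nat.pos_of_ne_zero fun h => hk (by rwa [show m + k = m + 0 by omega])
    set N := #{j ∈ range k | P j}
    have hNk : N ≤ k := (card_filter_le _ _).trans (card_range k).le
    have hNS : N ∈ {j | 1 ≤ j ∧ ¬P j} := by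
      refine ⟨(hP.iff_lt_card_filter_range hk0).mp hP0, fun hN => ?_⟩
      rcases hNk.lt_or_eq with hNk | hNk
      · exact lt_irrefl N ((hP.iff_lt_card_filter_range hNk).mp hN)
      · exact hk ((congrArg P hNk).mp hN)
    refine congrArg (m + ·) (le_antisymm (Nat.sInf_le hNS) (le_csInf ⟨N, hNS⟩ fun j hj => ?_))
    exact not_lt.mp fun hjN => hj.2 ((hP.iff_lt_card_filter_range (hjN.trans_le hNk)).mpr hjN)

theorem le_childLevel (m : ℕ) (y : EuclideanSpace ℝ (Fin d)) :
    m ≤ childLevel μ ε k C m y := by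
  by_cases hp : PorousCube μ ε k m y
  · rw [childLevel_of_porousCube C hp]; omega
  · rw [childLevel_of_not_porousCube C hp]; omega

theorem childLevel_congr (h : y ∈ dyadicCube d (childLevel μ ε k C m x) x) :
    childLevel μ ε k C m y = childLevel μ ε k C m x := by
  have hm : y ∈ dyadicCube d m x := dyadicCube_subset_of_le (le_childLevel C m x) x h
  by_cases hp : PorousCube μ ε k m x
  · have hpy := (porousCube_congr hm).mpr hp
    rw [childLevel_of_porousCube C hp] at h ⊢
    rw [childLevel_of_porousCube C hpy, C.compat m x y hm]
    set N := #{j ∈ range k | C.c m x ∈ dyadicCube d (m + j) x}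
    have hP : Antitone fun j => C.c m x ∈ dyadicCube d (m + j) x :=
      fun i j hij h => dyadicCube_subset_of_le (by omega) x h
    -- `y` and `x` share their dyadic cubes down to level `m + N`, and below it neither
    -- lies in the ancestors of the chosen cube.
    have hsame : ∀ j ≤ N, dyadicCube d (m + j) y = dyadicCube d (m + j) x := fun j hj =>
      dyadicCube_eq_of_mem (dyadicCube_subset_of_le (by omega) x h)
    refine congrArg (m + ·) (congrArg card (filter_congr fun j hj => ?_))
    rcases le_or_gt j N with hjN | hNj
    · rw [hsame j hjN]
    · have hjk := Finset.mem_range.mp hj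
      have hxN : C.c m x ∉ dyadicCube d (m + N) x := fun hN =>
        lt_irrefl N ((hP.iff_lt_card_filter_range (hNj.trans hjk)).mp hN)
      refine iff_of_false (fun hy => hxN ?_) fun hx => ?_
      · rw [← hsame N le_rfl]; exact dyadicCube_subset_of_le (by omega) y hy
      · exact hNj.not_ge ((hP.iff_lt_card_filter_range hjk).mp hx).le
  · rw [childLevel_of_not_porousCube C hp,
      childLevel_of_not_porousCube C fun hpy => hp ((porousCube_congr hm).mp hpy)]

theorem lyapPorous_eq (m : ℕ) (x : EuclideanSpace ℝ (Fin d)) :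
    lyapPorous μ ε k C m x = Real.log 2 / μ.real (dyadicCube d m x) *
      ∑ j ∈ range k, μ.real (dyadicCube d (m + j) (C.c m x)) := by
  rw [lyapPorous, ← mul_add_sum_range_mul_sub_eq_sum_range
    fun j => μ.real (dyadicCube d (m + j) (C.c m x))]
  simp only [measureReal_def, add_assoc]

theorem lyapPorous_congr {m : ℕ} (h : y ∈ dyadicCube d m x) :
    lyapPorous μ ε k C m y = lyapPorous μ ε k C m x := by
  rw [lyapPorous, lyapPorous, C.compat m x y h, dyadicCube_eq_of_mem h]

theorem lyapPorous_nonneg (m : ℕ) (x : EuclideanSpace ℝ (Fin d)) :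
    0 ≤ lyapPorous μ ε k C m x := by
  rw [lyapPorous_eq]
  have := Real.log_nonneg one_le_two
  positivity

theorem lyapPorous_le [IsFiniteMeasure μ] {m : ℕ} (hp : PorousCube μ ε k m x) :
    lyapPorous μ ε k C m x ≤ k * Real.log 2 := by
  have hsub : ∀ j, μ.real (dyadicCube d (m + j) (C.c m x)) ≤ μ.real (dyadicCube d m x) :=
    fun j => measureReal_mono (by
      rw [← dyadicCube_eq_of_mem (C.mem m x hp)]
      exact dyadicCube_subset_of_le (by omega) _)
  have hlog := Real.log_nonneg one_le_two
  rw [lyapPorous_eq]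
  rcases measureReal_nonneg.eq_or_lt with h0 | hpos
  · rw [← h0, div_zero, zero_mul]
    positivity
  rw [div_mul_eq_mul_div, div_le_iff₀ hpos]
  calc Real.log 2 * ∑ j ∈ range k, μ.real (dyadicCube d (m + j) (C.c m x))
      ≤ Real.log 2 * ∑ _j ∈ range k, μ.real (dyadicCube d m x) :=
        mul_le_mul_of_nonneg_left (sum_le_sum fun j _ => hsub j) hlog
    _ = k * Real.log 2 * μ.real (dyadicCube d m x) := by
        rw [sum_const, card_range, nsmul_eq_mul]
        ring

theorem childLevel_sub_eq_sum_indicator {m : ℕ} (hp : PorousCube μ ε k m x)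
    (hy : y ∈ dyadicCube d m x) :
    (childLevel μ ε k C m y : ℝ) - m =
      ∑ j ∈ range k, (dyadicCube d (m + j) (C.c m x)).indicator 1 y := by
  rw [childLevel_of_porousCube C ((porousCube_congr hy).mpr hp), C.compat m x y hy, card_filter]
  push_cast
  rw [add_sub_cancel_left]
  refine sum_congr rfl fun j _ => ?_
  rw [indicator_apply, Pi.one_apply]
  exact if_congr mem_dyadicCube_comm rfl rfl

theorem setIntegral_lyapPorous_sub_childLevel [IsFiniteMeasure μ] {m : ℕ}
    (hp : PorousCube μ ε k m x) :
    ∫ y in dyadicCube d m x,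
      (lyapPorous μ ε k C m x - Real.log 2 * ((childLevel μ ε k C m y : ℝ) - m)) ∂μ =
      0 := by
  have hAQ : ∀ j, dyadicCube d (m + j) (C.c m x) ⊆ dyadicCube d m x := fun j => by
    rw [← dyadicCube_eq_of_mem (C.mem m x hp)]
    exact dyadicCube_subset_of_le (by omega) _
  have hint : ∀ j, Integrable ((dyadicCube d (m + j) (C.c m x)).indicator
      (1 : EuclideanSpace ℝ (Fin d) → ℝ)) (μ.restrict (dyadicCube d m x)) := fun j =>
    (integrable_const 1).indicator (measurableSet_dyadicCube _ _)
  rw [setIntegral_congr_fun (measurableSet_dyadicCube m x)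
      fun y hy => by rw [childLevel_sub_eq_sum_indicator C hp hy],
    integral_sub (integrable_const _) ((integrable_finsetSum _ fun j _ => hint j).const_mul _),
    integral_const_mul, integral_finsetSum _ fun j _ => hint j, setIntegral_const]
  simp_rw [integral_indicator_one (measurableSet_dyadicCube _ _),
    measureReal_restrict_apply (measurableSet_dyadicCube _ _), inter_eq_left.mpr (hAQ _),
    lyapPorous_eq, smul_eq_mul]
  rcases eq_or_ne (μ.real (dyadicCube d m x)) 0 with h0 | h0
  · have hA0 : ∀ j, μ.real (dyadicCube d (m + j) (C.c m x)) = 0 := fun j =>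
      le_antisymm (h0 ▸ measureReal_mono (hAQ j)) measureReal_nonneg
    simp [h0, hA0]
  · field_simp
    ring

def treeNode (n : ℕ) (x : EuclideanSpace ℝ (Fin d)) : Set (EuclideanSpace ℝ (Fin d)) :=
  dyadicCube d (levelSeq μ ε k C x n) x

theorem mem_treeNode_self (n : ℕ) (x : EuclideanSpace ℝ (Fin d)) : x ∈ treeNode C n x :=
  mem_dyadicCube_self _ x

theorem measurableSet_treeNode (n : ℕ) (x : EuclideanSpace ℝ (Fin d)) :
    MeasurableSet (treeNode C n x) :=
  measurableSet_dyadicCube _ x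

theorem levelSeq_monotone (x : EuclideanSpace ℝ (Fin d)) : Monotone (levelSeq μ ε k C x) :=
  monotone_nat_of_le_succ fun _ => le_childLevel C _ x

theorem treeNode_antitone (x : EuclideanSpace ℝ (Fin d)) : Antitone (treeNode C · x) :=
  fun _ _ h => dyadicCube_subset_of_le (levelSeq_monotone C x h) x

theorem levelSeq_eq_of_mem_treeNode (h : y ∈ treeNode C n x) (hj : j ≤ n) :
    levelSeq μ ε k C y j = levelSeq μ ε k C x j := by
  induction j with
  | zero => rfl
  | succ j ih =>
    rw [levelSeq, levelSeq, ih (by omega)]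
    exact childLevel_congr C (treeNode_antitone C x hj h)

/-- The nodes of generation `n` are the fibres of this map into a countable type. -/
noncomputable def nodeCode (n : ℕ) (x : EuclideanSpace ℝ (Fin d)) : ℕ × (Fin d → ℤ) :=
  (levelSeq μ ε k C x n, fun j => ⌊(2 : ℝ) ^ levelSeq μ ε k C x n * x j⌋)

theorem nodeCode_eq_iff : nodeCode C n y = nodeCode C n x ↔ y ∈ treeNode C n x := by
  refine ⟨fun h j => ?_, fun h => ?_⟩
  · have hlevel := congrArg Prod.fst h
    have hfloor := congrFun (congrArg Prod.snd h) j
    simp only [nodeCode] at hlevel hfloor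
    rwa [hlevel] at hfloor
  · rw [nodeCode, nodeCode, levelSeq_eq_of_mem_treeNode C h le_rfl]
    exact Prod.ext rfl (funext h)

theorem preimage_nodeCode : nodeCode C n ⁻¹' {nodeCode C n x} = treeNode C n x :=
  ext fun _ => nodeCode_eq_iff C

theorem measurable_nodeCode (n : ℕ) : Measurable (nodeCode C n) :=
  measurable_to_countable fun x => by
    rw [preimage_nodeCode]
    exact measurableSet_treeNode C n x

noncomputable def lyapunovDefect (i : ℕ) (x : EuclideanSpace ℝ (Fin d)) : ℝ :=
  Set.indicator {i : ℕ | PorousCube μ ε k (levelSeq μ ε k C x i) x}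
    (fun i => lyapPorous μ ε k C (levelSeq μ ε k C x i) x
      - Real.log 2 * ((levelSeq μ ε k C x (i + 1) : ℝ) - (levelSeq μ ε k C x i : ℝ))) i

theorem lyapunovDefect_of_mem_treeNode (h : y ∈ treeNode C i x) :
    lyapunovDefect C i y = if PorousCube μ ε k (levelSeq μ ε k C x i) x then
      lyapPorous μ ε k C (levelSeq μ ε k C x i) x - Real.log 2 *
        ((childLevel μ ε k C (levelSeq μ ε k C x i) y : ℝ) - levelSeq μ ε k C x i)
      else 0 := by
  have hM := levelSeq_eq_of_mem_treeNode C h le_rfl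
  have hsucc : levelSeq μ ε k C y (i + 1) = childLevel μ ε k C (levelSeq μ ε k C x i) y := by
    rw [levelSeq, hM]
  simp only [lyapunovDefect, indicator_apply, mem_ofPred_eq, hsucc, hM, porousCube_congr h,
    lyapPorous_congr C h]

theorem lyapunovDefect_congr (h : y ∈ treeNode C (i + 1) x) :
    lyapunovDefect C i y = lyapunovDefect C i x := by
  rw [lyapunovDefect_of_mem_treeNode C (treeNode_antitone C x i.le_succ h),
    lyapunovDefect_of_mem_treeNode C (mem_treeNode_self C i x), childLevel_congr C h]

theorem abs_lyapunovDefect_le [IsFiniteMeasure μ] (i : ℕ) (x : EuclideanSpace ℝ (Fin d)) :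
    |lyapunovDefect C i x| ≤ k * Real.log 2 := by
  have hlog := Real.log_nonneg one_le_two
  rw [lyapunovDefect_of_mem_treeNode C (mem_treeNode_self C i x)]
  split_ifs with hp
  · have h0 := lyapPorous_nonneg C (levelSeq μ ε k C x i) x
    have h1 := lyapPorous_le C hp
    have hcard : (#{j ∈ range k | C.c (levelSeq μ ε k C x i) x ∈
        dyadicCube d (levelSeq μ ε k C x i + j) x} : ℝ) ≤ k := by
      exact_mod_cast (card_filter_le _ _).trans (card_range k).le
    rw [childLevel_of_porousCube C hp]
    push_cast
    rw [add_sub_cancel_left, abs_le]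
    constructor <;> nlinarith
  · rw [abs_zero]
    positivity

theorem setIntegral_lyapunovDefect_treeNode [IsFiniteMeasure μ] (i : ℕ)
    (x : EuclideanSpace ℝ (Fin d)) : ∫ y in treeNode C i x, lyapunovDefect C i y ∂μ = 0 := by
  rw [setIntegral_congr_fun (measurableSet_treeNode C i x)
    fun y hy => lyapunovDefect_of_mem_treeNode C hy]
  by_cases hp : PorousCube μ ε k (levelSeq μ ε k C x i) x
  · simp only [hp, if_true]
    exact setIntegral_lyapPorous_sub_childLevel C hp
  · simp only [hp, if_false, integral_zero]

theorem measurable_lyapunovDefect (i : ℕ) : Measurable (lyapunovDefect C i) :=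
  measurable_of_const_on_fibers (measurable_nodeCode C (i + 1)) fun _ _ h =>
    (lyapunovDefect_congr C ((nodeCode_eq_iff C).mp h.symm)).symm

theorem integral_lyapunovDefect_mul_eq_zero [IsFiniteMeasure μ] (hji : j < i) :
    ∫ x, lyapunovDefect C i x * lyapunovDefect C j x ∂μ = 0 := by
  refine integral_mul_eq_zero_of_setIntegral_fiber_eq_zero (measurable_nodeCode C i)
    (.of_bound
      ((measurable_lyapunovDefect C i).mul (measurable_lyapunovDefect C j)).aestronglyMeasurable
      ((k * Real.log 2) ^ 2)
      (Eventually.of_forall fun x => ?_)) (fun x y h => ?_) fun x => ?_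
  · rw [Real.norm_eq_abs, abs_mul, sq]
    exact mul_le_mul (abs_lyapunovDefect_le C i x) (abs_lyapunovDefect_le C j x)
      (abs_nonneg _) ((abs_nonneg _).trans (abs_lyapunovDefect_le C i x))
  · exact (lyapunovDefect_congr C (treeNode_antitone C x hji ((nodeCode_eq_iff C).mp h.symm))).symm
  · rw [preimage_nodeCode]
    exact setIntegral_lyapunovDefect_treeNode C i x

theorem pairwise_integral_lyapunovDefect_mul_eq_zero [IsFiniteMeasure μ] :
    Pairwise fun i j => ∫ x, lyapunovDefect C i x * lyapunovDefect C j x ∂μ = 0 := by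
  intro i j hij
  rcases hij.lt_or_gt with hij | hji
  · simp_rw [mul_comm (lyapunovDefect C i _)]
    exact integral_lyapunovDefect_mul_eq_zero C hij
  · exact integral_lyapunovDefect_mul_eq_zero C hji

end Tree

theorem lyapunov_matches_length_on_porous_scales_general (d k : ℕ) (ε : ℝ)
    (μ : Measure (EuclideanSpace ℝ (Fin d))) [IsProbabilityMeasure μ]
    (C : AdmissibleChoice μ ε k) :
    ∀ᵐ x ∂μ, Filter.Tendsto (fun n : ℕ =>
      (1 / (n : ℝ)) * ∑ i ∈ Finset.range n,
        Set.indicator {i : ℕ | PorousCube μ ε k (levelSeq μ ε k C x i) x}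
          (fun i => lyapPorous μ ε k C (levelSeq μ ε k C x i) x
            - Real.log 2 * ((levelSeq μ ε k C x (i + 1) : ℝ) - (levelSeq μ ε k C x i : ℝ)))
          i)
      Filter.atTop (nhds 0) := by
  filter_upwards [ae_tendsto_average_of_pairwise_orthogonal
    (fun i => (measurable_lyapunovDefect C i).aestronglyMeasurable) (abs_lyapunovDefect_le C)
    (pairwise_integral_lyapunovDefect_mul_eq_zero C)] with x hx
  simpa only [one_div, inv_mul_eq_div, lyapunovDefect] using hx

/-- Let `μ` be a dyadic mean `(k,η,ε)`-porous probability measure on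
`[0,1)^d` with `ε ∈ [0,2^{-kd}]`, and let `R*` be the associated tree (for any admissible
choice `C`). With `M̄_i(x) = log(ℓ(R_i(x))/ℓ(R_{i+1}(x)))`, for `μ`-a.e. `x` one has
`(1/n)·Σ_{i<n, R_i(x)∈𝒫} (λ(R_i(x)) − M̄_i(x)) → 0`. -/
theorem lyapunov_matches_length_on_porous_scales (d k : ℕ) (hd : 1 ≤ d) (hk : 1 ≤ k)
    (ε η : ℝ) (hε0 : 0 ≤ ε) (hε : ε ≤ ((2 : ℝ) ^ (k * d))⁻¹)
    (μ : Measure (EuclideanSpace ℝ (Fin d))) [IsProbabilityMeasure μ]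
    (hsupp : μ (unitCube d) = 1)
    (hpor : DyadicMeanPorousWith μ k η ε) (C : AdmissibleChoice μ ε k) :
    ∀ᵐ x ∂μ, Filter.Tendsto (fun n : ℕ =>
      (1 / (n : ℝ)) * ∑ i ∈ Finset.range n,
        Set.indicator {i : ℕ | PorousCube μ ε k (levelSeq μ ε k C x i) x}
          (fun i => lyapPorous μ ε k C (levelSeq μ ε k C x i) x
            - Real.log 2 * ((levelSeq μ ε k C x (i + 1) : ℝ) - (levelSeq μ ε k C x i : ℝ)))
          i)
      Filter.atTop (nhds 0) :=
  lyapunov_matches_length_on_porous_scales_general d k ε μ C
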